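/- Variance of the Bell distribution: for every θ > 0, ∑_{z=0}^∞ z² · p_θ(z) − (θ e^θ)² = θ(1 + θ) e^θ (in particular the second moment series converges). -/

import Mathlib

open Real

/-- The `z`-th Bell number given by Dobinski's formula (with `0^0 = 1`). -/
noncomputable def bellDobinski (z : ℕ) : ℝ :=
  (Real.exp 1)⁻¹ * ∑' k : ℕ, (k : ℝ) ^ z / (Nat.factorial k : ℝ)

/-- The probability mass function of the Bell distribution with parameter `θ`:
`p_θ(z) = θ^z e^{1 - e^θ} B_z / z!`. -/
noncomputable def bellPMF (θ : ℝ) (z : ℕ) : ℝ :=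
  θ ^ z * Real.exp (1 - Real.exp θ) * bellDobinski z / (Nat.factorial z : ℝ)

/-! By Dobinski's formula, `z² p_θ(z) = e^{-e^θ} ∑ₖ z² (θk)^z / (z! k!)`. This double series
converges absolutely, so it may be summed over `z` first: `∑_z z² y^z / z! = (y + y²) e^y` at
`y = θk` leaves `e^{-e^θ} ∑ₖ (θk + θ²k²) (e^θ)^k / k!`, and the same exponential moments at
`y = e^θ` give the second moment `θe^θ + θ²(e^θ + e^{2θ})`. -/

open Nat

lemma hasSum_pow_div_factorial (x : ℝ) : HasSum (fun k : ℕ => x ^ k / k !) (exp x) :=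
  Real.exp_eq_exp_ℝ ▸ NormedSpace.expSeries_div_hasSum_exp x

lemma HasSum.natCast_mul_pow_div_factorial {g : ℕ → ℝ} {x a : ℝ}
    (h : HasSum (fun k : ℕ => g (k + 1) * x ^ k / k !) a) :
    HasSum (fun k : ℕ => k * g k * x ^ k / k !) (x * a) := by
  rw [← hasSum_nat_add_iff' 1, Finset.sum_range_one, Nat.cast_zero, zero_mul, zero_mul, zero_div,
    sub_zero]
  refine (h.mul_left x).congr_fun fun k => ?_
  rw [factorial_succ]
  push_cast
  field_simp
  ring

lemma hasSum_natCast_mul_pow_div_factorial (x : ℝ) :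
    HasSum (fun k : ℕ => (k : ℝ) * x ^ k / k !) (x * exp x) := by
  have h : HasSum (fun k : ℕ => (1 : ℕ → ℝ) (k + 1) * x ^ k / k !) (exp x) := by
    simpa only [Pi.one_apply, one_mul] using hasSum_pow_div_factorial x
  simpa only [Pi.one_apply, mul_one] using h.natCast_mul_pow_div_factorial

lemma hasSum_natCast_sq_mul_pow_div_factorial (x : ℝ) :
    HasSum (fun k : ℕ => (k : ℝ) ^ 2 * x ^ k / k !) ((x + x ^ 2) * exp x) := by
  have h : HasSum (fun k : ℕ => ((k + 1 : ℕ) : ℝ) * x ^ k / k !) (x * exp x + exp x) := by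
    refine ((hasSum_natCast_mul_pow_div_factorial x).add (hasSum_pow_div_factorial x)).congr_fun
      fun k => ?_
    push_cast
    ring
  convert h.natCast_mul_pow_div_factorial using 1
  · ext k
    ring
  · ring

noncomputable def bellSqMomentTerm (θ : ℝ) (p : ℕ × ℕ) : ℝ :=
  (p.2 : ℝ) ^ 2 * (θ * p.1) ^ p.2 / p.2 ! / p.1 !

lemma hasSum_bellSqMomentTerm_row (θ : ℝ) (k : ℕ) :
    HasSum (fun z => bellSqMomentTerm θ (k, z)) ((θ * k + (θ * k) ^ 2) * exp θ ^ k / k !) := by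
  rw [← Real.exp_nat_mul, mul_comm (k : ℝ) θ]
  exact (hasSum_natCast_sq_mul_pow_div_factorial (θ * k)).div_const _

lemma hasSum_bellSqMomentTerm_rowSums (θ : ℝ) :
    HasSum (fun k : ℕ => (θ * k + (θ * k) ^ 2) * exp θ ^ k / k !)
      ((θ * exp θ + θ ^ 2 * (exp θ + exp θ ^ 2)) * exp (exp θ)) := by
  have h := ((hasSum_natCast_mul_pow_div_factorial (exp θ)).mul_left θ).add
    ((hasSum_natCast_sq_mul_pow_div_factorial (exp θ)).mul_left (θ ^ 2))
  rw [add_mul, mul_assoc, mul_assoc]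
  exact h.congr_fun fun k => by ring

lemma summable_bellSqMomentTerm_of_nonneg {θ : ℝ} (hθ : 0 ≤ θ) :
    Summable (bellSqMomentTerm θ) := by
  refine (summable_prod_of_nonneg fun p => by unfold bellSqMomentTerm; positivity).2
    ⟨fun k => (hasSum_bellSqMomentTerm_row θ k).summable, ?_⟩
  simpa only [(hasSum_bellSqMomentTerm_row θ _).tsum_eq] using
    (hasSum_bellSqMomentTerm_rowSums θ).summable

lemma abs_bellSqMomentTerm (θ : ℝ) (p : ℕ × ℕ) :
    |bellSqMomentTerm θ p| = bellSqMomentTerm |θ| p := by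
  simp [bellSqMomentTerm, abs_mul, abs_div, abs_pow]

lemma summable_bellSqMomentTerm (θ : ℝ) : Summable (bellSqMomentTerm θ) := by
  refine Summable.of_abs ?_
  simpa only [abs_bellSqMomentTerm] using summable_bellSqMomentTerm_of_nonneg (abs_nonneg θ)

lemma hasSum_bellSqMomentTerm (θ : ℝ) :
    HasSum (bellSqMomentTerm θ) ((θ * exp θ + θ ^ 2 * (exp θ + exp θ ^ 2)) * exp (exp θ)) := by
  have h := (summable_bellSqMomentTerm θ).hasSum
  rwa [(hasSum_bellSqMomentTerm_rowSums θ).unique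
    (h.prod_fiberwise (hasSum_bellSqMomentTerm_row θ))]

lemma sq_mul_bellPMF_eq_tsum (θ : ℝ) (z : ℕ) :
    (z : ℝ) ^ 2 * bellPMF θ z = exp (-exp θ) * ∑' k : ℕ, bellSqMomentTerm θ (k, z) := by
  have h : ∑' k : ℕ, bellSqMomentTerm θ (k, z)
      = (z : ℝ) ^ 2 * θ ^ z / z ! * ∑' k : ℕ, (k : ℝ) ^ z / k ! := by
    rw [← tsum_mul_left]
    exact tsum_congr fun k => by rw [bellSqMomentTerm, mul_pow]; ring
  rw [h, bellPMF, bellDobinski, Real.exp_sub, Real.exp_neg]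
  field_simp

lemma hasSum_sq_mul_bellPMF (θ : ℝ) :
    HasSum (fun z : ℕ => (z : ℝ) ^ 2 * bellPMF θ z) (θ * exp θ + θ ^ 2 * (exp θ + exp θ ^ 2)) := by
  have h := ((Equiv.prodComm ℕ ℕ).hasSum_iff.2 (hasSum_bellSqMomentTerm θ)).prod_fiberwise
    fun z => ((summable_bellSqMomentTerm θ).prod_symm.prod_factor z).hasSum
  have hexp : exp (-exp θ) * exp (exp θ) = 1 := by
    rw [← Real.exp_add, neg_add_cancel, Real.exp_zero]
  rw [← mul_one (_ + _), ← hexp, mul_left_comm]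
  exact (h.mul_left _).congr_fun (sq_mul_bellPMF_eq_tsum θ)

theorem bellPMF_variance_general (θ : ℝ) :
    (Summable fun z : ℕ => (z : ℝ) ^ 2 * bellPMF θ z) ∧
      (∑' z : ℕ, (z : ℝ) ^ 2 * bellPMF θ z) - (θ * Real.exp θ) ^ 2
        = θ * (1 + θ) * Real.exp θ := by
  have h := hasSum_sq_mul_bellPMF θ
  exact ⟨h.summable, by rw [h.tsum_eq]; ring⟩

/-- Variance of the Bell distribution: for every `θ > 0`, the second-moment series
`∑_{z=0}^∞ z² ⬝ p_θ(z)` converges and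
`∑_{z=0}^∞ z² ⬝ p_θ(z) - (θ e^θ)² = θ (1 + θ) e^θ`. -/
theorem bellPMF_variance (θ : ℝ) (hθ : 0 < θ) :
    (Summable fun z : ℕ => (z : ℝ) ^ 2 * bellPMF θ z) ∧
      (∑' z : ℕ, (z : ℝ) ^ 2 * bellPMF θ z) - (θ * Real.exp θ) ^ 2
        = θ * (1 + θ) * Real.exp θ :=
  bellPMF_variance_general θ
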